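/- arXiv:2205.03570 — 3 statements merged into one kernel-verified Lean document; each statement's English description precedes it below -/
import Mathlib

section
/- For every v ∈ int(K), the matrix T_v belongs to the scaling group G, is symmetric positive definite, and satisfies T_v e = v; moreover T_v is the unique symmetric positive definite element of G mapping the unit element e to v. -/
open scoped BigOperators
open Matrix

namespace SOCP

/-- Index type for a block vector with `k` blocks, block `i` having dimension `d i + 1`. -/
abbrev Idx {k : ℕ} (d : Fin k → ℕ) : Type := (i : Fin k) × Fin (d i + 1)

/-- The `i`-th block of a block vector. -/
def blk {k : ℕ} {d : Fin k → ℕ} (v : Idx d → ℝ) (i : Fin k) : Fin (d i + 1) → ℝ :=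
  fun j => v ⟨i, j⟩

/-- Squared Euclidean norm of the tail `u_{2:m}` of a single block. -/
def tailNormSq {m : ℕ} (u : Fin (m + 1) → ℝ) : ℝ := ∑ j : Fin m, u j.succ ^ 2

/-- Euclidean norm of the tail `u_{2:m}` of a single block. -/
noncomputable def tailNorm {m : ℕ} (u : Fin (m + 1) → ℝ) : ℝ := Real.sqrt (tailNormSq u)

/-- Membership in the cone `K` (a direct product of second-order cones). -/
def inK {k : ℕ} {d : Fin k → ℕ} (v : Idx d → ℝ) : Prop :=
  ∀ i : Fin k, tailNorm (blk v i) ≤ v ⟨i, 0⟩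

/-- Membership in the interior of the cone `K`. -/
def inIntK {k : ℕ} {d : Fin k → ℕ} (v : Idx d → ℝ) : Prop :=
  ∀ i : Fin k, tailNorm (blk v i) < v ⟨i, 0⟩

/-- Euclidean inner product of vectors. -/
def dotV {ι : Type*} [Fintype ι] (u v : ι → ℝ) : ℝ := ∑ a, u a * v a

/-- Euclidean norm of a vector. -/
noncomputable def vnorm {ι : Type*} [Fintype ι] (v : ι → ℝ) : ℝ :=
  Real.sqrt (∑ a, v a ^ 2)

/-- Blockwise Jordan product. -/
def jmul {k : ℕ} {d : Fin k → ℕ} (u v : Idx d → ℝ) : Idx d → ℝ := fun a =>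
  if a.2 = 0 then ∑ j, u ⟨a.1, j⟩ * v ⟨a.1, j⟩
  else u ⟨a.1, 0⟩ * v a + v ⟨a.1, 0⟩ * u a

/-- The unit element `e` of the Jordan algebra. -/
def unitE {k : ℕ} {d : Fin k → ℕ} : Idx d → ℝ := fun a => if a.2 = 0 then 1 else 0

/-- `λ_min` of the `i`-th block. -/
noncomputable def lamMin {k : ℕ} {d : Fin k → ℕ} (v : Idx d → ℝ) (i : Fin k) : ℝ :=
  v ⟨i, 0⟩ - tailNorm (blk v i)

/-- `λ_max` of the `i`-th block. -/
noncomputable def lamMax {k : ℕ} {d : Fin k → ℕ} (v : Idx d → ℝ) (i : Fin k) : ℝ :=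
  v ⟨i, 0⟩ + tailNorm (blk v i)

/-- Arrow-head matrix of a single block. -/
def arrowBlk {m : ℕ} (u : Fin (m + 1) → ℝ) : Matrix (Fin (m + 1)) (Fin (m + 1)) ℝ :=
  Matrix.of fun j j' =>
    if j = 0 then u j' else if j' = 0 then u j else if j = j' then u 0 else 0

/-- Arrow-head matrix `mat(v)` (block diagonal). -/
def matV {k : ℕ} {d : Fin k → ℕ} (v : Idx d → ℝ) : Matrix (Idx d) (Idx d) ℝ :=
  Matrix.blockDiagonal' fun i => arrowBlk (blk v i)

/-- `β_u = sqrt(u_1^2 - ‖u_{2:m}‖^2)` for a single block. -/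
noncomputable def betaOf {m : ℕ} (u : Fin (m + 1) → ℝ) : ℝ :=
  Real.sqrt (u 0 ^ 2 - tailNormSq u)

/-- The matrix `T_u` for a single block. -/
noncomputable def Tblk {m : ℕ} (u : Fin (m + 1) → ℝ) :
    Matrix (Fin (m + 1)) (Fin (m + 1)) ℝ :=
  Matrix.of fun j j' =>
    if j = 0 then u j'
    else if j' = 0 then u j
    else (if j = j' then betaOf u else 0) + u j * u j' / (betaOf u + u 0)

/-- The matrix `T_x` (block diagonal). -/
noncomputable def TV {k : ℕ} {d : Fin k → ℕ} (x : Idx d → ℝ) :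
    Matrix (Idx d) (Idx d) ℝ :=
  Matrix.blockDiagonal' fun i => Tblk (blk x i)

/-- `w_{xs} = T_x s`. -/
noncomputable def wxs {k : ℕ} {d : Fin k → ℕ} (x s : Idx d → ℝ) : Idx d → ℝ :=
  (TV x).mulVec s

/-- Central-path coefficient `μ(x,s) = xᵀs/k`. -/
noncomputable def muV {k : ℕ} {d : Fin k → ℕ} (x s : Idx d → ℝ) : ℝ :=
  dotV x s / (k : ℝ)

/-- Central-path distance `d_2(x,s) = √2 ‖w_{xs} - μ e‖`. -/
noncomputable def d2 {k : ℕ} {d : Fin k → ℕ} (x s : Idx d → ℝ) : ℝ :=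
  Real.sqrt 2 * vnorm (wxs x s - muV x s • unitE)

/-- Central-path distance `d_∞(x,s)`. -/
noncomputable def dInf {k : ℕ} {d : Fin k → ℕ} (x s : Idx d → ℝ) : ℝ :=
  ⨆ i : Fin k, max |lamMax (wxs x s) i - muV x s| |lamMin (wxs x s) i - muV x s|

/-- The matrix `Q = diag(1, -I)` for a single block. -/
def Qblk {m : ℕ} : Matrix (Fin (m + 1)) (Fin (m + 1)) ℝ :=
  Matrix.of fun j j' => if j = j' then (if j = 0 then (1 : ℝ) else -1) else 0

/-- The scaling group `G` of block matrices `Θ G` with `(Gⁱ)ᵀ Qⁱ Gⁱ = Qⁱ`. -/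
def scalingGroup {k : ℕ} (d : Fin k → ℕ) : Set (Matrix (Idx d) (Idx d) ℝ) :=
  { D | ∃ (θ : Fin k → ℝ) (G : ∀ i, Matrix (Fin (d i + 1)) (Fin (d i + 1)) ℝ),
      (∀ i, 0 < θ i) ∧ (∀ i, (G i)ᵀ * Qblk * G i = Qblk) ∧
      D = Matrix.blockDiagonal' fun i => θ i • G i }

/-- Operator 2-norm of a matrix. -/
noncomputable def op2 {m n : Type*} [Fintype m] [Fintype n] [DecidableEq n]
    (M : Matrix m n ℝ) : ℝ :=
  ‖LinearMap.toContinuousLinearMap (Matrix.toEuclideanLin M)‖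

/-- `R_{xs} = T_x X⁻¹ S T_x`. -/
noncomputable def Rxs {k : ℕ} {d : Fin k → ℕ} (x s : Idx d → ℝ) :
    Matrix (Idx d) (Idx d) ℝ :=
  TV x * (matV x)⁻¹ * matV s * TV x

/-- The scaled Newton system of the infeasible IPM (Monteiro–Zhang family). -/
def NewtonSys {k p : ℕ} {d : Fin k → ℕ} (A : Matrix (Fin p) (Idx d) ℝ)
    (Cm : Matrix (Idx d) (Idx d) ℝ) (x : Idx d → ℝ) (y : Fin p → ℝ) (s : Idx d → ℝ)
    (ν : ℝ) (D : Matrix (Idx d) (Idx d) ℝ)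
    (dx : Idx d → ℝ) (dy : Fin p → ℝ) (ds : Idx d → ℝ) : Prop :=
  A.mulVec dx = -((1 - ν) • A.mulVec x) ∧
  Aᵀ.mulVec dy + Cm.mulVec dx + ds =
    -((1 - ν) • (Aᵀ.mulVec y + Cm.mulVec x + s)) ∧
  (matV ((D⁻¹)ᵀ.mulVec x)).mulVec (D.mulVec ds)
      + (matV (D.mulVec s)).mulVec ((D⁻¹)ᵀ.mulVec dx)
    = (ν * muV x s) • unitE - jmul ((D⁻¹)ᵀ.mulVec x) (D.mulVec s)

/-- Central-path neighborhood `N_2(γ)`. -/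
def N2 {k : ℕ} (d : Fin k → ℕ) (p : ℕ) (γ : ℝ) :
    Set ((Idx d → ℝ) × (Fin p → ℝ) × (Idx d → ℝ)) :=
  { z | inIntK z.1 ∧ inIntK z.2.2 ∧ d2 z.1 z.2.2 ≤ γ * muV z.1 z.2.2 }

/-- Central-path neighborhood `N_∞(γ)`. -/
def NInf {k : ℕ} (d : Fin k → ℕ) (p : ℕ) (γ : ℝ) :
    Set ((Idx d → ℝ) × (Fin p → ℝ) × (Idx d → ℝ)) :=
  { z | inIntK z.1 ∧ inIntK z.2.2 ∧ dInf z.1 z.2.2 ≤ γ * muV z.1 z.2.2 }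

/-- The matrix `U_u` for a single block: zero first row and column and lower-right block
`(u_1 - β_u) P_u`, with `P_u` the projection onto the complement of the tail of `u`
(zero when the tail vanishes). -/
noncomputable def Ublk {m : ℕ} (u : Fin (m + 1) → ℝ) :
    Matrix (Fin (m + 1)) (Fin (m + 1)) ℝ :=
  Matrix.of fun j j' =>
    if j = 0 ∨ j' = 0 then 0
    else if tailNormSq u = 0 then 0
    else (u 0 - betaOf u) * ((if j = j' then (1 : ℝ) else 0) - u j * u j' / tailNormSq u)

/-- The block-diagonal matrix `U_x`. -/
noncomputable def UV {k : ℕ} {d : Fin k → ℕ} (x : Idx d → ℝ) :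
    Matrix (Idx d) (Idx d) ℝ :=
  Matrix.blockDiagonal' fun i => Ublk (blk x i)

/-- `Γ_p = 2 (γ²/2 + (1-ν)² k)^{1/2} / (1 - 3γ)`. -/
noncomputable def GammaP (γ ν : ℝ) (k : ℕ) : ℝ :=
  2 * Real.sqrt (γ ^ 2 / 2 + (1 - ν) ^ 2 * k) / (1 - 3 * γ)

/-- `Γ̃ = (4(γ² + δ²)/(1-3γ)²) (1 - δ/√(2k))⁻¹`. -/
noncomputable def GammaTilde (γ δ : ℝ) (k : ℕ) : ℝ :=
  4 * (γ ^ 2 + δ ^ 2) / (1 - 3 * γ) ^ 2 * (1 - δ / Real.sqrt (2 * k))⁻¹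

/-!
Blockwise, `T_u` is symmetric with `T_u Q T_u = β_u² Q` and `T_u e = u`, so `β_u⁻¹ T_u` is a
Lorentz transformation. It is positive definite because it is congruent to
`diag(β_u² / u_1, Ttail u)` with `Ttail u = β_u I + t tᵀ / (β_u + u_1)`, `t = u_{2:m}`.

Conversely, let `B` be positive semidefinite with `Bᵀ Q B = c Q` and `B e = u`. Then the first row
and column of `B` are `u`, the corner entry gives `c = β_u²`, and the lower-right block `C` of `B`
satisfies `C² = t tᵀ + β_u² I = (Ttail u)²`. Positive semidefinite square roots are unique, so
`C = Ttail u` and `B = T_u`.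
-/

end SOCP

namespace Matrix

variable {o R : Type*} {p : o → Type*} [DecidableEq o]

theorem blockDiagonal'_mulVec_apply [Fintype o] [∀ i, Fintype (p i)]
    [NonUnitalNonAssocSemiring R] (M : ∀ i, Matrix (p i) (p i) R) (x : (Σ i, p i) → R)
    (a : Σ i, p i) :
    (blockDiagonal' M *ᵥ x) a = (M a.1 *ᵥ fun j => x ⟨a.1, j⟩) a.2 := by
  obtain ⟨i, j⟩ := a
  simp only [mulVec, dotProduct, Fintype.sum_sigma, blockDiagonal'_apply]
  rw [Finset.sum_eq_single i (fun i' _ hi' => by simp [Ne.symm hi']) (by simp)]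
  simp

theorem blockDiagonal'_submatrix_sigmaMk [Zero R] (M : ∀ i, Matrix (p i) (p i) R) (i : o) :
    (blockDiagonal' M).submatrix (Sigma.mk i) (Sigma.mk i) = M i := by
  ext j l
  simp [blockDiagonal'_apply_eq]

theorem posDef_blockDiagonal' [Fintype o] [∀ i, Fintype (p i)] [CommRing R] [PartialOrder R]
    [IsOrderedAddMonoid R] [StarRing R] {M : ∀ i, Matrix (p i) (p i) R}
    (hM : ∀ i, (M i).PosDef) : (blockDiagonal' M).PosDef := by
  refine .of_dotProduct_mulVec_pos (isHermitian_blockDiagonal'_iff.2 fun i => (hM i).1)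
    fun x hx => ?_
  have hsplit : star x ⬝ᵥ blockDiagonal' M *ᵥ x
      = ∑ i, star (fun j => x ⟨i, j⟩) ⬝ᵥ M i *ᵥ fun j => x ⟨i, j⟩ := by
    simp only [dotProduct, Fintype.sum_sigma, blockDiagonal'_mulVec_apply, Pi.star_apply]
  obtain ⟨⟨i, j⟩, hij⟩ := Function.ne_iff.1 hx
  rw [hsplit]
  exact Finset.sum_pos' (fun i _ => (hM i).posSemidef.dotProduct_mulVec_nonneg _)
    ⟨i, Finset.mem_univ _, (hM i).dotProduct_mulVec_pos fun h0 => hij (congrFun h0 j)⟩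

theorem dotProduct_eq_zero_add_tail {R : Type*} [NonUnitalNonAssocSemiring R] {m : ℕ}
    (x w : Fin (m + 1) → R) : x ⬝ᵥ w = x 0 * w 0 + Fin.tail x ⬝ᵥ Fin.tail w := by
  simp [dotProduct, Fin.sum_univ_succ, Fin.tail]

end Matrix

namespace SOCP

theorem mul_Qblk_mul_apply {m : ℕ} (B C : Matrix (Fin (m + 1)) (Fin (m + 1)) ℝ)
    (j l : Fin (m + 1)) :
    (B * Qblk (m := m) * C) j l = B j 0 * C 0 l - ∑ r : Fin m, B j r.succ * C r.succ l := by
  simp [mul_apply, Qblk, Fin.sum_univ_succ, Fin.succ_ne_zero, sub_eq_add_neg]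

section Block

variable {m : ℕ} (u : Fin (m + 1) → ℝ)

noncomputable def Ttail : Matrix (Fin m) (Fin m) ℝ :=
  betaOf u • 1 + (betaOf u + u 0)⁻¹ • vecMulVec (Fin.tail u) (Fin.tail u)

theorem tailNormSq_eq_dotProduct : tailNormSq u = Fin.tail u ⬝ᵥ Fin.tail u := by
  simp [tailNormSq, dotProduct, Fin.tail, sq]

@[simp] theorem Tblk_zero_apply (j : Fin (m + 1)) : Tblk u 0 j = u j := by simp [Tblk]

@[simp] theorem Tblk_apply_zero (j : Fin (m + 1)) : Tblk u j 0 = u j := by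
  by_cases hj : j = 0 <;> simp [Tblk, hj]

theorem Tblk_submatrix_succ : (Tblk u).submatrix Fin.succ Fin.succ = Ttail u := by
  ext j l
  simp [Tblk, Ttail, Fin.tail, vecMulVec_apply, one_apply, Fin.succ_ne_zero, Fin.succ_inj,
    div_eq_inv_mul]

@[simp] theorem Tblk_succ_succ (j l : Fin m) : Tblk u j.succ l.succ = Ttail u j l := by
  rw [← Tblk_submatrix_succ]; rfl

theorem Tblk_transpose : (Tblk u)ᵀ = Tblk u := by
  ext j j'
  simp only [transpose_apply, Tblk, of_apply]
  rcases eq_or_ne j 0 with hj | hj <;> rcases eq_or_ne j' 0 with hj' | hj' <;>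
    simp [hj, hj', eq_comm, mul_comm]

theorem Tblk_mulVec_single_zero : Tblk u *ᵥ Pi.single 0 1 = u := by
  ext j; simp

theorem Ttail_transpose : (Ttail u)ᵀ = Ttail u := by
  simp [Ttail, transpose_vecMulVec]

theorem Tblk_mulVec_zero (x : Fin (m + 1) → ℝ) :
    (Tblk u *ᵥ x) 0 = u 0 * x 0 + Fin.tail u ⬝ᵥ Fin.tail x := by
  simp [mulVec, dotProduct, Fin.sum_univ_succ, Fin.tail]

theorem Tblk_mulVec_tail (x : Fin (m + 1) → ℝ) :
    Fin.tail (Tblk u *ᵥ x) = x 0 • Fin.tail u + Ttail u *ᵥ Fin.tail x := by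
  ext j
  simp [mulVec, dotProduct, Fin.sum_univ_succ, Fin.tail, mul_comm]

theorem Tblk_dotProduct_mulVec (x : Fin (m + 1) → ℝ) :
    x ⬝ᵥ Tblk u *ᵥ x = u 0 * x 0 ^ 2 + 2 * x 0 * (Fin.tail u ⬝ᵥ Fin.tail x)
      + Fin.tail x ⬝ᵥ Ttail u *ᵥ Fin.tail x := by
  rw [dotProduct_eq_zero_add_tail, Tblk_mulVec_zero, Tblk_mulVec_tail, dotProduct_add,
    dotProduct_smul, dotProduct_comm (Fin.tail x), smul_eq_mul]
  ring

variable {u} (hu : tailNorm u < u 0)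
include hu

theorem apply_zero_pos : 0 < u 0 := (Real.sqrt_nonneg _).trans_lt hu

theorem tailNormSq_lt_sq : tailNormSq u < u 0 ^ 2 := (Real.sqrt_lt' (apply_zero_pos hu)).1 hu

theorem betaOf_sq : betaOf u ^ 2 = u 0 ^ 2 - tailNormSq u :=
  Real.sq_sqrt (sub_nonneg.2 (tailNormSq_lt_sq hu).le)

theorem betaOf_pos : 0 < betaOf u := Real.sqrt_pos.2 (sub_pos.2 (tailNormSq_lt_sq hu))

theorem Ttail_mulVec_tail : Ttail u *ᵥ Fin.tail u = u 0 • Fin.tail u := by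
  have hA : betaOf u + u 0 ≠ 0 := (add_pos (betaOf_pos hu) (apply_zero_pos hu)).ne'
  have htt : Fin.tail u ⬝ᵥ Fin.tail u = (u 0 - betaOf u) * (betaOf u + u 0) := by
    rw [← tailNormSq_eq_dotProduct]; linear_combination betaOf_sq hu
  rw [Ttail, add_mulVec, smul_mulVec, one_mulVec, smul_mulVec, vecMulVec_mulVec, htt]
  ext j
  simp
  field_simp
  ring

theorem Ttail_mul_self :
    Ttail u * Ttail u = vecMulVec (Fin.tail u) (Fin.tail u) + betaOf u ^ 2 • 1 := by
  have hA : betaOf u + u 0 ≠ 0 := by linarith [betaOf_pos hu, apply_zero_pos hu]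
  calc Ttail u * Ttail u
      = betaOf u • Ttail u
          + (betaOf u + u 0)⁻¹ • vecMulVec (Ttail u *ᵥ Fin.tail u) (Fin.tail u) := by
        conv_lhs => arg 2; rw [Ttail]
        rw [mul_add, Matrix.mul_smul, mul_one, Matrix.mul_smul, mul_vecMulVec]
    _ = _ := by
        rw [Ttail_mulVec_tail hu, smul_vecMulVec, Ttail]
        match_scalars
        · ring
        · field_simp

theorem Ttail_posDef : (Ttail u).PosDef := by
  refine (PosDef.one.smul (betaOf_pos hu)).add_posSemidef ?_
  simpa using (posSemidef_vecMulVec_self_star (Fin.tail u)).smul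
    (inv_nonneg.2 (add_pos (betaOf_pos hu) (apply_zero_pos hu)).le)

/-- Completing the square in `x_1`, with `z = x_{2:m} + (x_1 / u_1) u_{2:m}`. -/
theorem Tblk_dotProduct_mulVec_eq (x : Fin (m + 1) → ℝ) :
    x ⬝ᵥ Tblk u *ᵥ x = betaOf u ^ 2 / u 0 * x 0 ^ 2
      + (Fin.tail x + (x 0 / u 0) • Fin.tail u) ⬝ᵥ
          Ttail u *ᵥ (Fin.tail x + (x 0 / u 0) • Fin.tail u) := by
  have hu0 := (apply_zero_pos hu).ne'
  have hsym : Fin.tail u ⬝ᵥ Ttail u *ᵥ Fin.tail x = u 0 * (Fin.tail u ⬝ᵥ Fin.tail x) := by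
    rw [dotProduct_mulVec, ← mulVec_transpose, Ttail_transpose, Ttail_mulVec_tail hu,
      smul_dotProduct, smul_eq_mul]
  rw [Tblk_dotProduct_mulVec, mulVec_add, mulVec_smul, Ttail_mulVec_tail hu]
  simp only [dotProduct_add, add_dotProduct, dotProduct_smul, smul_dotProduct, smul_eq_mul, hsym,
    ← tailNormSq_eq_dotProduct, dotProduct_comm (Fin.tail x) (Fin.tail u)]
  field_simp
  linear_combination -x 0 ^ 2 * betaOf_sq hu

theorem Tblk_posDef : (Tblk u).PosDef := by
  refine .of_dotProduct_mulVec_pos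
    (by rw [IsHermitian, conjTranspose_eq_transpose_of_trivial, Tblk_transpose]) fun x hx => ?_
  have hC := Ttail_posDef hu
  rw [star_trivial, Tblk_dotProduct_mulVec_eq hu]
  rcases eq_or_ne (x 0) 0 with h0 | h0
  · have htail : Fin.tail x ≠ 0 := fun h =>
      hx (funext fun j => Fin.cases h0 (congrFun h) j)
    simpa [h0] using hC.dotProduct_mulVec_pos htail
  · have hCz := hC.posSemidef.dotProduct_mulVec_nonneg (Fin.tail x + (x 0 / u 0) • Fin.tail u)
    rw [star_trivial] at hCz
    have hu0 := apply_zero_pos hu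
    have hβ := betaOf_pos hu
    positivity

theorem Tblk_mul_Qblk_mul_self : Tblk u * Qblk * Tblk u = betaOf u ^ 2 • Qblk := by
  have hcol : Ttail u *ᵥ Fin.tail u = u 0 • Fin.tail u := Ttail_mulVec_tail hu
  have hrow : Fin.tail u ᵥ* Ttail u = u 0 • Fin.tail u := by
    rw [← mulVec_transpose, Ttail_transpose, hcol]
  have hsq := Ttail_mul_self hu
  have hβ := betaOf_sq hu
  ext j l
  rw [mul_Qblk_mul_apply]
  rcases Fin.eq_zero_or_eq_succ j with rfl | ⟨j, rfl⟩ <;>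
    rcases Fin.eq_zero_or_eq_succ l with rfl | ⟨l, rfl⟩
  · simp [Qblk, ← sq, tailNormSq, hβ]
  · have h : ∑ r, u r.succ * Ttail u r l = u 0 * u l.succ := by
      simpa [vecMul, dotProduct, Fin.tail] using congrFun hrow l
    simp [Qblk, (Fin.succ_ne_zero l).symm, h]
  · have h : ∑ r, Ttail u j r * u r.succ = u 0 * u j.succ := by
      simpa [mulVec, dotProduct, Fin.tail] using congrFun hcol j
    simp [Qblk, Fin.succ_ne_zero, h]
    ring
  · have h := congrFun (congrFun hsq j) l
    simp only [mul_apply] at h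
    simp only [Tblk_succ_succ, Tblk_zero_apply, Tblk_apply_zero, h]
    simp [Qblk, vecMulVec_apply, one_apply, Fin.tail, hβ]
    split_ifs <;> ring

open scoped MatrixOrder in
theorem eq_Tblk_of_posSemidef {B : Matrix (Fin (m + 1)) (Fin (m + 1)) ℝ} {c : ℝ}
    (hB : B.PosSemidef) (hQ : Bᵀ * Qblk * B = c • Qblk) (he : B *ᵥ Pi.single 0 1 = u) :
    B = Tblk u := by
  have hsym : Bᵀ = B := by rw [← conjTranspose_eq_transpose_of_trivial, hB.1]
  rw [hsym] at hQ
  have hcol (j : Fin (m + 1)) : B j 0 = u j := by simpa using congrFun he j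
  have hrow (j : Fin (m + 1)) : B 0 j = u j := by
    rw [← hcol, ← transpose_apply B, hsym]
  have hc : c = betaOf u ^ 2 := by
    have h := congrFun (congrFun hQ 0) 0
    rw [mul_Qblk_mul_apply] at h
    simp only [Qblk, hcol, hrow, ← sq, Matrix.smul_apply, of_apply, if_true, smul_eq_mul,
      mul_one] at h
    rw [← h, betaOf_sq hu, tailNormSq]
  subst hc
  have hsq : B.submatrix Fin.succ Fin.succ * B.submatrix Fin.succ Fin.succ
      = vecMulVec (Fin.tail u) (Fin.tail u) + betaOf u ^ 2 • 1 := by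
    ext j l
    have h := congrFun (congrFun hQ j.succ) l.succ
    rw [mul_Qblk_mul_apply] at h
    simp [Qblk, hcol, hrow, vecMulVec_apply, one_apply, Fin.tail, mul_apply] at h ⊢
    split_ifs at h ⊢ <;> linarith
  have hsub : B.submatrix Fin.succ Fin.succ = Ttail u :=
    (CFC.mul_self_eq_mul_self_iff _ _ (hB.submatrix _).nonneg
      (Ttail_posDef hu).posSemidef.nonneg).1 (hsq.trans (Ttail_mul_self hu).symm)
  ext j l
  rcases Fin.eq_zero_or_eq_succ j with rfl | ⟨j, rfl⟩ <;>
    rcases Fin.eq_zero_or_eq_succ l with rfl | ⟨l, rfl⟩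
  · simp [hcol]
  · simp [hrow]
  · simp [hcol]
  · simpa using congrFun (congrFun hsub j) l

end Block

section Product

variable {k : ℕ} {d : Fin k → ℕ}

theorem blk_unitE (i : Fin k) : blk (unitE (d := d)) i = Pi.single 0 1 := by
  ext j
  simp [blk, unitE, Pi.single_apply]

theorem TV_transpose (v : Idx d → ℝ) : (TV v)ᵀ = TV v := by
  simp only [TV, blockDiagonal'_transpose, Tblk_transpose]

theorem TV_mulVec_unitE (v : Idx d → ℝ) : TV v *ᵥ unitE = v := by
  ext ⟨i, j⟩
  rw [TV, blockDiagonal'_mulVec_apply]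
  exact congrFun ((blk_unitE i).symm ▸ Tblk_mulVec_single_zero (blk v i)) j

variable {v : Idx d → ℝ} (hv : inIntK v)
include hv

theorem TV_posDef : (TV v).PosDef := posDef_blockDiagonal' fun i => Tblk_posDef (hv i)

theorem TV_mem_scalingGroup : TV v ∈ scalingGroup d := by
  have hβ (i : Fin k) : 0 < betaOf (blk v i) := betaOf_pos (hv i)
  refine ⟨fun i => betaOf (blk v i), fun i => (betaOf (blk v i))⁻¹ • Tblk (blk v i), hβ,
    fun i => ?_, ?_⟩
  · rw [transpose_smul, Tblk_transpose, Matrix.smul_mul, Matrix.smul_mul, Matrix.mul_smul,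
      Tblk_mul_Qblk_mul_self (hv i), smul_smul, smul_smul]
    conv_rhs => rw [← one_smul ℝ Qblk]
    congr 1
    field_simp [(hβ i).ne']
  · simp only [TV, smul_smul, mul_inv_cancel₀ (hβ _).ne', one_smul]

theorem eq_TV_of_mem_scalingGroup {D : Matrix (Idx d) (Idx d) ℝ} (hD : D ∈ scalingGroup d)
    (hpd : D.PosDef) (he : D *ᵥ unitE = v) : D = TV v := by
  obtain ⟨θ, G, -, hG, rfl⟩ := hD
  refine congrArg blockDiagonal' (funext fun i =>
    eq_Tblk_of_posSemidef (hv i) (c := θ i ^ 2) ?_ ?_ ?_)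
  · simpa [blockDiagonal'_submatrix_sigmaMk] using hpd.posSemidef.submatrix (Sigma.mk i)
  · rw [transpose_smul, Matrix.smul_mul, Matrix.smul_mul, Matrix.mul_smul, hG, smul_smul, sq]
  · ext j
    rw [← blk_unitE i, blk, ← he, blockDiagonal'_mulVec_apply]
    rfl

end Product

/-- Proposition 2: `T_v` is the unique symmetric positive definite scaling matrix
mapping `e` to `v`. -/
theorem Tv_unique_scaling {k : ℕ} {d : Fin k → ℕ}
    (v : Idx d → ℝ) (hv : inIntK v) :
    TV v ∈ scalingGroup d ∧ (TV v)ᵀ = TV v ∧ (TV v).PosDef ∧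
    (TV v).mulVec unitE = v ∧
    (∀ D ∈ scalingGroup d, Dᵀ = D → D.PosDef → D.mulVec unitE = v → D = TV v) :=
  ⟨TV_mem_scalingGroup hv, TV_transpose v, TV_posDef hv, TV_mulVec_unitE v,
    fun _ hD _ hpd he => eq_TV_of_mem_scalingGroup hv hD hpd he⟩

end SOCP
end

section
/- Suppose (x, s) ∈ int(K) × int(K), let D = ΘG ∈ G, and set x̄ = (ΘG)ᵀx, s̄ = (ΘG)^{−1}s. Let w = w_{xs} = T_x s and w̄ = w_{x̄s̄} = T_{x̄} s̄. Then for each block i: (a) the first component of w̄^{(i)} equals the first component of w^{(i)}, and the Euclidean norms of the tails of w̄^{(i)} and w^{(i)} are equal; (b) λ_min(w̄^{(i)}) = λ_min(w^{(i)}) and λ_max(w̄^{(i)}) = λ_max(w^{(i)}); (c) d_2(x̄, s̄) = d_2(x, s) and d_∞(x̄, s̄) = d_∞(x, s). -/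
open scoped BigOperators
open Matrix

namespace SOCP

/-! Blockwise, the first entry of `T_u v` is `uᵀv`, and `T_u` is multiplicative for the Jordan
determinant `det u = u₁² - ‖u_{2:m}‖²`: `det (T_u v) = det u · det v` for `u` in the cone.
Scaling by `θG` with `GᵀQG = Q` (hence also `GQGᵀ = Q`) multiplies `det x` by `θ²` and `det s`
by `θ⁻²` while preserving `xᵀs`. So `w̄` and `w` have equal first entries and determinants per
block, hence equal tail norms, and `λ_min`, `λ_max`, `μ`, `d_2`, `d_∞` only depend on these. -/

-- The Jordan-algebra determinant `λ_min · λ_max` of a block.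
def jdet {m : ℕ} (u : Fin (m + 1) → ℝ) : ℝ := u 0 ^ 2 - tailNormSq u

lemma tailNormSq_nonneg {m : ℕ} (u : Fin (m + 1) → ℝ) : 0 ≤ tailNormSq u :=
  Finset.sum_nonneg fun _ _ => sq_nonneg _

lemma jdet_nonneg_of_tailNorm_le {m : ℕ} {u : Fin (m + 1) → ℝ} (h : tailNorm u ≤ u 0) :
    0 ≤ jdet u := by
  have hsq : tailNorm u ^ 2 = tailNormSq u := Real.sq_sqrt (tailNormSq_nonneg u)
  have := pow_le_pow_left₀ (Real.sqrt_nonneg _) h 2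
  rw [jdet, ← hsq]
  exact sub_nonneg.mpr this

section Lorentz

variable {m : ℕ} {M : Matrix (Fin (m + 1)) (Fin (m + 1)) ℝ} {c : ℝ}

lemma Qblk_eq_diagonal :
    (Qblk : Matrix (Fin (m + 1)) (Fin (m + 1)) ℝ) =
      Matrix.diagonal fun j => if j = 0 then 1 else -1 := by
  ext j j'
  by_cases h : j = j' <;> simp [Qblk, h]

lemma Qblk_mul_Qblk : (Qblk : Matrix (Fin (m + 1)) (Fin (m + 1)) ℝ) * Qblk = 1 := by
  rw [Qblk_eq_diagonal, Matrix.diagonal_mul_diagonal, ← Matrix.diagonal_one]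
  congr 1
  ext j
  split_ifs <;> norm_num

lemma jdet_eq_dotProduct (u : Fin (m + 1) → ℝ) : jdet u = u ⬝ᵥ Qblk *ᵥ u := by
  simp [jdet, tailNormSq, Qblk_eq_diagonal, Matrix.mulVec_diagonal, dotProduct,
    Fin.sum_univ_succ, pow_two, sub_eq_add_neg]

lemma jdet_mulVec (hM : Mᵀ * Qblk * M = c • Qblk) (v : Fin (m + 1) → ℝ) :
    jdet (M *ᵥ v) = c * jdet v := by
  rw [jdet_eq_dotProduct, jdet_eq_dotProduct, Matrix.mulVec_mulVec, Matrix.dotProduct_mulVec,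
    ← Matrix.vecMul_transpose, Matrix.vecMul_vecMul, ← Matrix.mul_assoc, hM,
    Matrix.vecMul_smul, smul_dotProduct, ← Matrix.dotProduct_mulVec, smul_eq_mul]

lemma inv_smul_Qblk_mul_transpose_mul_Qblk_mul (hM : Mᵀ * Qblk * M = c • Qblk) (hc : c ≠ 0) :
    (c⁻¹ • (Qblk * Mᵀ * Qblk)) * M = 1 := by
  rw [Matrix.smul_mul, Matrix.mul_assoc, Matrix.mul_assoc, ← Matrix.mul_assoc Mᵀ, hM,
    Matrix.mul_smul, Qblk_mul_Qblk, smul_smul, inv_mul_cancel₀ hc, one_smul]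

lemma isUnit_det_of_transpose_mul_Qblk_mul (hM : Mᵀ * Qblk * M = c • Qblk) (hc : c ≠ 0) :
    IsUnit M.det :=
  Matrix.isUnit_det_of_left_inverse (inv_smul_Qblk_mul_transpose_mul_Qblk_mul hM hc)

lemma mul_Qblk_mul_transpose (hM : Mᵀ * Qblk * M = c • Qblk) (hc : c ≠ 0) :
    M * Qblk * Mᵀ = c • Qblk := by
  have h := mul_eq_one_comm.mp (inv_smul_Qblk_mul_transpose_mul_Qblk_mul hM hc)
  have h' := congrArg (c • · * Qblk) h
  simp only [Matrix.mul_smul, smul_smul, mul_inv_cancel₀ hc, one_smul, Matrix.mul_assoc,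
    Qblk_mul_Qblk, Matrix.mul_one, Matrix.one_mul, Matrix.smul_mul] at h'
  simpa only [Matrix.mul_assoc] using h'

lemma jdet_transpose_mulVec (hM : Mᵀ * Qblk * M = c • Qblk) (hc : c ≠ 0)
    (u : Fin (m + 1) → ℝ) : jdet (Mᵀ *ᵥ u) = c * jdet u :=
  jdet_mulVec (by rw [Matrix.transpose_transpose]; exact mul_Qblk_mul_transpose hM hc) u

lemma mul_jdet_inv_mulVec (hM : Mᵀ * Qblk * M = c • Qblk) (hc : c ≠ 0)
    (v : Fin (m + 1) → ℝ) : c * jdet (M⁻¹ *ᵥ v) = jdet v := by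
  rw [← jdet_mulVec hM, Matrix.mulVec_mulVec,
    Matrix.mul_nonsing_inv _ (isUnit_det_of_transpose_mul_Qblk_mul hM hc), Matrix.one_mulVec]

end Lorentz

lemma transpose_mulVec_dotProduct_inv_mulVec {ι : Type*} [Fintype ι] [DecidableEq ι]
    {M : Matrix ι ι ℝ} (hM : IsUnit M.det) (u v : ι → ℝ) :
    Mᵀ *ᵥ u ⬝ᵥ M⁻¹ *ᵥ v = u ⬝ᵥ v := by
  rw [Matrix.mulVec_transpose, ← Matrix.dotProduct_mulVec, Matrix.mulVec_mulVec,
    Matrix.mul_nonsing_inv _ hM, Matrix.one_mulVec]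

section Tblk

variable {m : ℕ} (u v : Fin (m + 1) → ℝ)

lemma Tblk_mulVec_zero_s3 : (Tblk u *ᵥ v) 0 = u ⬝ᵥ v := by
  simp [Tblk, Matrix.mulVec, dotProduct]

lemma Tblk_mulVec_succ (q : Fin m) :
    (Tblk u *ᵥ v) q.succ =
      (v 0 + (∑ b : Fin m, u b.succ * v b.succ) / (betaOf u + u 0)) * u q.succ
        + betaOf u * v q.succ := by
  simp only [Matrix.mulVec, dotProduct, Tblk, Matrix.of_apply, Fin.succ_ne_zero, ↓reduceIte,
    ite_mul, add_mul, zero_mul, Fin.sum_univ_succ, Fin.succ_inj, Finset.sum_add_distrib,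
    Finset.sum_ite_eq, Finset.mem_univ, Finset.sum_div]
  rw [Finset.sum_mul, Finset.sum_congr rfl fun b _ =>
    show u q.succ * u b.succ / (betaOf u + u 0) * v b.succ
      = u b.succ * v b.succ / (betaOf u + u 0) * u q.succ by ring]
  ring

lemma tailNormSq_Tblk_mulVec :
    tailNormSq (Tblk u *ᵥ v) =
      tailNormSq u * (v 0 + (∑ b : Fin m, u b.succ * v b.succ) / (betaOf u + u 0)) ^ 2
        + 2 * betaOf u * (v 0 + (∑ b : Fin m, u b.succ * v b.succ) / (betaOf u + u 0))
          * ∑ b : Fin m, u b.succ * v b.succ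
        + betaOf u ^ 2 * tailNormSq v := by
  simp only [tailNormSq, Tblk_mulVec_succ, add_sq, Finset.sum_add_distrib, mul_pow,
    Finset.sum_mul, Finset.mul_sum]
  congr 2 <;> exact Finset.sum_congr rfl fun _ _ => by ring

lemma jdet_Tblk_mulVec (hu : 0 ≤ jdet u) : jdet (Tblk u *ᵥ v) = jdet u * jdet v := by
  have hβ : betaOf u ^ 2 = jdet u := Real.sq_sqrt hu
  have hβ0 : 0 ≤ betaOf u := Real.sqrt_nonneg _
  have hw0 : (Tblk u *ᵥ v) 0 = u 0 * v 0 + ∑ b : Fin m, u b.succ * v b.succ := by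
    rw [Tblk_mulVec_zero_s3, dotProduct, Fin.sum_univ_succ]
  rw [jdet, hw0, tailNormSq_Tblk_mulVec, jdet, jdet]
  rw [jdet] at hβ
  by_cases hc : betaOf u + u 0 = 0
  · -- `β_u = -u₁` forces the tail of `u` to vanish.
    have ht : tailNormSq u = 0 := by nlinarith
    have hu_tail : ∀ b : Fin m, u b.succ = 0 := fun b =>
      pow_eq_zero_iff two_ne_zero |>.mp <|
        (Finset.sum_eq_zero_iff_of_nonneg fun _ _ => sq_nonneg _).mp ht b (Finset.mem_univ b)
    simp only [hu_tail, zero_mul, Finset.sum_const_zero, ht] at hβ ⊢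
    linear_combination (-tailNormSq v) * hβ
  · rw [show tailNormSq u = u 0 ^ 2 - betaOf u ^ 2 by linarith]
    field_simp
    ring

end Tblk

lemma tailNormSq_Tblk_mulVec_eq {m : ℕ} {u v u' v' : Fin (m + 1) → ℝ} (hu : 0 ≤ jdet u)
    (hu' : 0 ≤ jdet u') (hdot : u' ⬝ᵥ v' = u ⬝ᵥ v) (hdet : jdet u' * jdet v' = jdet u * jdet v) :
    tailNormSq (Tblk u' *ᵥ v') = tailNormSq (Tblk u *ᵥ v) := by
  have h := jdet_Tblk_mulVec u' v' hu'
  rw [hdet, ← jdet_Tblk_mulVec u v hu, jdet, jdet, Tblk_mulVec_zero_s3, Tblk_mulVec_zero_s3,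
    hdot] at h
  linarith

lemma Tblk_transpose_mulVec_inv_mulVec {m : ℕ} {M : Matrix (Fin (m + 1)) (Fin (m + 1)) ℝ}
    {c : ℝ} (hM : Mᵀ * Qblk * M = c • Qblk) (hc : 0 < c) {u : Fin (m + 1) → ℝ}
    (hu : 0 ≤ jdet u) (v : Fin (m + 1) → ℝ) :
    (Tblk (Mᵀ *ᵥ u) *ᵥ (M⁻¹ *ᵥ v)) 0 = (Tblk u *ᵥ v) 0 ∧
      tailNormSq (Tblk (Mᵀ *ᵥ u) *ᵥ (M⁻¹ *ᵥ v)) = tailNormSq (Tblk u *ᵥ v) := by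
  have hdot := transpose_mulVec_dotProduct_inv_mulVec
    (isUnit_det_of_transpose_mul_Qblk_mul hM hc.ne') u v
  have hju := jdet_transpose_mulVec hM hc.ne' u
  refine ⟨by rw [Tblk_mulVec_zero_s3, Tblk_mulVec_zero_s3, hdot], ?_⟩
  refine tailNormSq_Tblk_mulVec_eq hu (by rw [hju]; positivity) hdot ?_
  rw [hju, mul_assoc, mul_left_comm, mul_jdet_inv_mulVec hM hc.ne']

lemma smul_transpose_mul_Qblk_mul_smul {m : ℕ} {G : Matrix (Fin (m + 1)) (Fin (m + 1)) ℝ}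
    (hG : Gᵀ * Qblk * G = Qblk) (θ : ℝ) :
    (θ • G)ᵀ * Qblk * (θ • G) = θ ^ 2 • Qblk := by
  rw [Matrix.transpose_smul, Matrix.smul_mul, Matrix.smul_mul, Matrix.mul_smul, hG, smul_smul,
    sq]

section Blocks

variable {k : ℕ} {d : Fin k → ℕ}

lemma blk_blockDiagonal'_mulVec (M : ∀ i, Matrix (Fin (d i + 1)) (Fin (d i + 1)) ℝ)
    (v : Idx d → ℝ) (i : Fin k) :
    blk (Matrix.blockDiagonal' M *ᵥ v) i = M i *ᵥ blk v i := by
  ext j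
  simp only [blk, Matrix.mulVec, dotProduct, ← Finset.univ_sigma_univ, Finset.sum_sigma,
    Matrix.blockDiagonal'_apply]
  rw [Finset.sum_eq_single i (fun b _ hb => by simp [Ne.symm hb]) (by simp)]
  simp

lemma blk_wxs (x s : Idx d → ℝ) (i : Fin k) :
    blk (wxs x s) i = Tblk (blk x i) *ᵥ blk s i :=
  blk_blockDiagonal'_mulVec _ s i

lemma vnorm_sub_smul_unitE (w : Idx d → ℝ) (c : ℝ) :
    vnorm (w - c • unitE) = √(∑ i, ((w ⟨i, 0⟩ - c) ^ 2 + tailNormSq (blk w i))) := by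
  rw [vnorm, ← Finset.univ_sigma_univ, Finset.sum_sigma]
  congr 1
  refine Finset.sum_congr rfl fun i _ => ?_
  simp [Fin.sum_univ_succ, unitE, tailNormSq, blk, Fin.succ_ne_zero]

end Blocks

lemma blockDiagonal'_inv_mul_blockDiagonal' {o : Type*} [Fintype o] [DecidableEq o]
    {n : o → Type*} [∀ i, Fintype (n i)] [∀ i, DecidableEq (n i)]
    {M : ∀ i, Matrix (n i) (n i) ℝ} (hM : ∀ i, IsUnit (M i).det) :
    Matrix.blockDiagonal' (fun i => (M i)⁻¹) * Matrix.blockDiagonal' M = 1 := by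
  rw [← Matrix.blockDiagonal'_mul]
  simp only [Matrix.nonsing_inv_mul _ (hM _)]
  exact Matrix.blockDiagonal'_one

theorem scaling_invariance_general {k : ℕ} {d : Fin k → ℕ}
    (x s : Idx d → ℝ) (hx : inIntK x)
    (θ : Fin k → ℝ) (hθ : ∀ i, 0 < θ i)
    (G : ∀ i, Matrix (Fin (d i + 1)) (Fin (d i + 1)) ℝ)
    (hG : ∀ i, (G i)ᵀ * Qblk * G i = Qblk)
    (D : Matrix (Idx d) (Idx d) ℝ)
    (hD : D = Matrix.blockDiagonal' fun i => θ i • G i)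
    (xb sb : Idx d → ℝ) (hxb : xb = Dᵀ.mulVec x) (hsb : sb = D⁻¹.mulVec s) :
    (∀ i : Fin k, wxs xb sb ⟨i, 0⟩ = wxs x s ⟨i, 0⟩) ∧
    (∀ i : Fin k, tailNorm (blk (wxs xb sb) i) = tailNorm (blk (wxs x s) i)) ∧
    (∀ i : Fin k, lamMin (wxs xb sb) i = lamMin (wxs x s) i ∧
      lamMax (wxs xb sb) i = lamMax (wxs x s) i) ∧
    d2 xb sb = d2 x s ∧ dInf xb sb = dInf x s := by
  have hM i := smul_transpose_mul_Qblk_mul_smul (hG i) (θ i)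
  have hθ2 i : 0 < θ i ^ 2 := pow_pos (hθ i) 2
  have hDinv_mul : Matrix.blockDiagonal' (fun i => (θ i • G i)⁻¹) * D = 1 := hD ▸
    blockDiagonal'_inv_mul_blockDiagonal' fun i =>
      isUnit_det_of_transpose_mul_Qblk_mul (hM i) (hθ2 i).ne'
  have hw i : wxs xb sb ⟨i, 0⟩ = wxs x s ⟨i, 0⟩ ∧
      tailNormSq (blk (wxs xb sb) i) = tailNormSq (blk (wxs x s) i) := by
    change blk (wxs xb sb) i 0 = blk (wxs x s) i 0 ∧ _
    rw [blk_wxs, blk_wxs, hxb, hsb, Matrix.inv_eq_left_inv hDinv_mul, hD,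
      Matrix.blockDiagonal'_transpose, blk_blockDiagonal'_mulVec, blk_blockDiagonal'_mulVec]
    exact Tblk_transpose_mulVec_inv_mulVec (hM i) (hθ2 i)
      (jdet_nonneg_of_tailNorm_le (hx i).le) _
  have hμ : muV xb sb = muV x s := by
    rw [muV, muV, dotV, dotV, hxb, hsb]
    congr 1
    exact transpose_mulVec_dotProduct_inv_mulVec
      (Matrix.isUnit_det_of_left_inverse hDinv_mul) x s
  have htail i : tailNorm (blk (wxs xb sb) i) = tailNorm (blk (wxs x s) i) :=
    congrArg Real.sqrt (hw i).2
  have hlam i : lamMin (wxs xb sb) i = lamMin (wxs x s) i ∧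
      lamMax (wxs xb sb) i = lamMax (wxs x s) i := by
    rw [lamMin, lamMin, lamMax, lamMax, htail, (hw i).1]
    exact ⟨rfl, rfl⟩
  refine ⟨fun i => (hw i).1, htail, hlam, ?_, ?_⟩
  · simp only [d2, vnorm_sub_smul_unitE, hμ, (hw _).1, (hw _).2]
  · simp only [dInf, hμ, (hlam _).1, (hlam _).2]

/-- Proposition 3: invariance of `w_{xs}` and of the central-path distances under scaling. -/
theorem scaling_invariance {k : ℕ} {d : Fin k → ℕ} (hk : 0 < k)
    (x s : Idx d → ℝ) (hx : inIntK x) (hs : inIntK s)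
    (θ : Fin k → ℝ) (hθ : ∀ i, 0 < θ i)
    (G : ∀ i, Matrix (Fin (d i + 1)) (Fin (d i + 1)) ℝ)
    (hG : ∀ i, (G i)ᵀ * Qblk * G i = Qblk)
    (D : Matrix (Idx d) (Idx d) ℝ)
    (hD : D = Matrix.blockDiagonal' fun i => θ i • G i)
    (xb sb : Idx d → ℝ) (hxb : xb = Dᵀ.mulVec x) (hsb : sb = D⁻¹.mulVec s) :
    (∀ i : Fin k, wxs xb sb ⟨i, 0⟩ = wxs x s ⟨i, 0⟩) ∧
    (∀ i : Fin k, tailNorm (blk (wxs xb sb) i) = tailNorm (blk (wxs x s) i)) ∧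
    (∀ i : Fin k, lamMin (wxs xb sb) i = lamMin (wxs x s) i ∧
      lamMax (wxs xb sb) i = lamMax (wxs x s) i) ∧
    d2 xb sb = d2 x s ∧ dInf xb sb = dInf x s :=
  scaling_invariance_general x s hx θ hθ G hG D hD xb sb hxb hsb

end SOCP
end

section
/- For all u, v ∈ ℝ^n, ‖u ∘ v‖ ≤ √2 ‖u‖ ‖v‖, where ∘ is the blockwise Jordan product and ‖·‖ is the Euclidean norm. -/
/-!
On a single block write `u = (a, x)` and `v = (b, y)`, so that `u ∘ v = (⟨u, v⟩, a y + b x)`.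
Cauchy–Schwarz bounds `⟨u, v⟩²` by `‖u‖²‖v‖²`, and
`‖u‖²‖v‖² - ‖a y + b x‖² = (ab - ⟨x, y⟩)² + (‖x‖²‖y‖² - ⟨x, y⟩²) ≥ 0`,
so `‖u ∘ v‖² ≤ 2‖u‖²‖v‖²` blockwise. Summing over the blocks,
`∑ᵢ ‖uⁱ‖²‖vⁱ‖² ≤ (∑ᵢ ‖uⁱ‖²)(∑ᵢ ‖vⁱ‖²)` since all terms are nonnegative.
-/

open scoped BigOperators
open Matrix

namespace SOCP

def jordanMul {m : ℕ} (u v : Fin (m + 1) → ℝ) : Fin (m + 1) → ℝ := fun j =>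
  if j = 0 then ∑ j', u j' * v j' else u 0 * v j + v 0 * u j

theorem sum_sq_mul_add_mul_le {ι : Type*} [Fintype ι] (a b : ℝ) (x y : ι → ℝ) :
    ∑ j, (a * y j + b * x j) ^ 2 ≤ (a ^ 2 + ∑ j, x j ^ 2) * (b ^ 2 + ∑ j, y j ^ 2) := by
  have expand : ∑ j, (a * y j + b * x j) ^ 2
      = a ^ 2 * ∑ j, y j ^ 2 + b ^ 2 * ∑ j, x j ^ 2 + 2 * a * b * ∑ j, x j * y j := by
    simp only [Finset.mul_sum, ← Finset.sum_add_distrib]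
    exact Finset.sum_congr rfl fun j _ => by ring
  have cauchy_schwarz := Finset.sum_mul_sq_le_sq_mul_sq Finset.univ x y
  nlinarith [sq_nonneg (a * b - ∑ j, x j * y j)]

theorem sum_sq_jordanMul_le {m : ℕ} (u v : Fin (m + 1) → ℝ) :
    ∑ j, jordanMul u v j ^ 2 ≤ 2 * (∑ j, u j ^ 2) * ∑ j, v j ^ 2 := by
  have head : (∑ j, u j * v j) ^ 2 ≤ (∑ j, u j ^ 2) * ∑ j, v j ^ 2 :=
    Finset.sum_mul_sq_le_sq_mul_sq _ _ _
  have tail := sum_sq_mul_add_mul_le (u 0) (v 0) (fun j : Fin m => u j.succ) (fun j => v j.succ)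
  rw [← Fin.sum_univ_succ (f := fun j => u j ^ 2), ← Fin.sum_univ_succ (f := fun j => v j ^ 2)]
    at tail
  have sum_sq_eq : ∑ j, jordanMul u v j ^ 2
      = (∑ j, u j * v j) ^ 2 + ∑ j : Fin m, (u 0 * v j.succ + v 0 * u j.succ) ^ 2 := by
    rw [Fin.sum_univ_succ]
    simp only [jordanMul, if_pos, Fin.succ_ne_zero, if_false]
  linarith

theorem sum_mul_le_sum_mul_sum {ι : Type*} (s : Finset ι) {f g : ι → ℝ}
    (hf : ∀ i ∈ s, 0 ≤ f i) (hg : ∀ i ∈ s, 0 ≤ g i) :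
    ∑ i ∈ s, f i * g i ≤ (∑ i ∈ s, f i) * ∑ i ∈ s, g i := by
  rw [Finset.sum_mul]
  exact Finset.sum_le_sum fun i hi =>
    mul_le_mul_of_nonneg_left (Finset.single_le_sum hg hi) (hf i hi)

theorem sum_sq_jmul_le {k : ℕ} {d : Fin k → ℕ} (u v : Idx d → ℝ) :
    ∑ a, jmul u v a ^ 2 ≤ 2 * (∑ a, u a ^ 2) * ∑ a, v a ^ 2 := by
  simp only [Fintype.sum_sigma]
  calc ∑ i, ∑ j, jmul u v ⟨i, j⟩ ^ 2 ≤ ∑ i, 2 * (∑ j, u ⟨i, j⟩ ^ 2) * ∑ j, v ⟨i, j⟩ ^ 2 :=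
        Finset.sum_le_sum fun i _ => sum_sq_jordanMul_le (blk u i) (blk v i)
    _ ≤ 2 * (∑ i, ∑ j, u ⟨i, j⟩ ^ 2) * ∑ i, ∑ j, v ⟨i, j⟩ ^ 2 := by
        simp only [mul_assoc, ← Finset.mul_sum]
        gcongr
        exact sum_mul_le_sum_mul_sum _ (fun i _ => by positivity) fun i _ => by positivity

/-- Lemma 7: `‖u ∘ v‖ ≤ √2 ‖u‖ ‖v‖` for the blockwise Jordan product. -/
theorem jordan_product_norm_bound {k : ℕ} {d : Fin k → ℕ} (u v : Idx d → ℝ) :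
    vnorm (jmul u v) ≤ Real.sqrt 2 * vnorm u * vnorm v := by
  calc vnorm (jmul u v) ≤ Real.sqrt (2 * (∑ a, u a ^ 2) * ∑ a, v a ^ 2) :=
        Real.sqrt_le_sqrt (sum_sq_jmul_le u v)
    _ = Real.sqrt 2 * vnorm u * vnorm v := by
        rw [Real.sqrt_mul (by positivity), Real.sqrt_mul (by norm_num)]
        rfl
end SOCP
end
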